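/- Let G be a bipartite simple graph in which every vertex has at most k neighbors, and let v be a vertex of G. If the graph obtained from G by deleting v (and all edges incident to v) has a proper edge coloring using k colors, then G has a proper edge coloring using k colors. -/

import Mathlib

/-- A proper edge coloring of a simple graph: distinct edges sharing an endpoint
get different colors. -/
def IsProperEdgeColoring {V α : Type*} (G : SimpleGraph V) (c : G.edgeSet → α) : Prop :=
  ∀ e₁ e₂ : G.edgeSet, e₁ ≠ e₂ →
    (∃ v, v ∈ (e₁ : Sym2 V) ∧ v ∈ (e₂ : Sym2 V)) → c e₁ ≠ c e₂

/-!
Extend the coloring one edge at a time. For an uncolored edge `xy` both endpoints have fewer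
than `k` colored edges, so some color `a` is missing at `x` and some color `b` at `y`. Swap `a`
and `b` along the `a`/`b` Kempe chain starting at `y`: afterwards `a` is missing at `y`. The chain
does not reach `x`: it is a path leaving `y` along an `a`-edge and alternating colors, and since
`x` and `y` lie on opposite sides of the bipartition it would enter `x` along an `a`-edge too. So
`a` is still missing at `x`, and `xy` can be colored `a`.
-/

namespace SimpleGraph

variable {V α : Type*} {H : SimpleGraph V} {c : Sym2 V → α}

theorem Adj.reachable_iff {u p q : V} (h : H.Adj p q) : H.Reachable u p ↔ H.Reachable u q :=
  ⟨fun hp => hp.trans h.reachable, fun hq => hq.trans h.symm.reachable⟩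

theorem isProperEdgeColoring_iff_adj :
    IsProperEdgeColoring H (fun e => c e) ↔
      ∀ ⦃x y z⦄, H.Adj x y → H.Adj x z → y ≠ z → c s(x, y) ≠ c s(x, z) := by
  constructor
  · intro hc x y z hxy hxz hyz
    refine hc ⟨s(x, y), hxy⟩ ⟨s(x, z), hxz⟩ ?_ ⟨x, by simp, by simp⟩
    exact fun h => hyz (Sym2.congr_right.mp (congrArg Subtype.val h))
  · rintro hc ⟨e₁, he₁⟩ ⟨e₂, he₂⟩ hne ⟨w, hw₁, hw₂⟩
    obtain ⟨y, rfl⟩ := Sym2.mem_iff_exists.mp hw₁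
    obtain ⟨z, rfl⟩ := Sym2.mem_iff_exists.mp hw₂
    exact hc he₁ he₂ (by rintro rfl; exact hne rfl)

def IsMissingColor (H : SimpleGraph V) (c : Sym2 V → α) (x : V) (a : α) : Prop :=
  ∀ ⦃y⦄, H.Adj x y → c s(x, y) ≠ a

theorem exists_isMissingColor [Fintype α] {x : V} [Fintype (H.neighborSet x)]
    (hx : H.degree x < Fintype.card α) : ∃ a, H.IsMissingColor c x a := by
  classical
  by_contra! h
  simp only [IsMissingColor, not_forall, not_not] at h
  have hsub : Finset.univ ⊆ (H.neighborFinset x).image (fun y => c s(x, y)) := by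
    intro a _
    obtain ⟨y, hy, rfl⟩ := h a
    exact Finset.mem_image_of_mem _ ((mem_neighborFinset _ _ _).mpr hy)
  have := (Finset.card_le_card hsub).trans Finset.card_image_le
  rw [Finset.card_univ, card_neighborFinset_eq_degree] at this
  omega

theorem degree_lt_degree_of_le {G : SimpleGraph V} {x y : V} [Fintype (H.neighborSet x)]
    [Fintype (G.neighborSet x)] (hHG : H ≤ G) (hxy : G.Adj x y) (hnxy : ¬ H.Adj x y) :
    H.degree x < G.degree x := by
  simp_rw [← card_neighborSet_eq_degree]
  exact Set.card_lt_card ⟨fun _ hz => hHG hz, fun hsub => hnxy (hsub hxy)⟩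

theorem _root_.IsProperEdgeColoring.update_sup_edge [DecidableEq V] {x y : V} {a : α}
    (hc : IsProperEdgeColoring H (fun e => c e)) (hx : H.IsMissingColor c x a)
    (hy : H.IsMissingColor c y a) :
    IsProperEdgeColoring (H ⊔ edge x y) (fun e => Function.update c s(x, y) a e) := by
  rw [isProperEdgeColoring_iff_adj] at hc ⊢
  have hH : ∀ ⦃p q⦄, (H ⊔ edge x y).Adj p q → s(p, q) ≠ s(x, y) → H.Adj p q := by
    rintro p q (h | h) hne
    · exact h
    · rw [edge_adj] at h
      rcases h.1 with ⟨rfl, rfl⟩ | ⟨rfl, rfl⟩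
      exacts [absurd rfl hne, absurd Sym2.eq_swap hne]
  have hmiss : ∀ ⦃p q r⦄, s(p, q) = s(x, y) → H.Adj p r → c s(p, r) ≠ a := by
    intro p q r hpq hpr
    rcases Sym2.eq_iff.mp hpq with ⟨rfl, rfl⟩ | ⟨rfl, rfl⟩
    exacts [hx hpr, hy hpr]
  intro p q r hpq hpr hqr
  by_cases hq : s(p, q) = s(x, y) <;> by_cases hr : s(p, r) = s(x, y)
  · exact absurd (Sym2.congr_right.mp (hq.trans hr.symm)) hqr
  · rw [hq, Function.update_self, Function.update_of_ne hr]
    exact (hmiss hq (hH hpr hr)).symm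
  · rw [hr, Function.update_self, Function.update_of_ne hq]
    exact hmiss hr (hH hpq hq)
  · rw [Function.update_of_ne hq, Function.update_of_ne hr]
    exact hc (hH hpq hq) (hH hpr hr) hqr

def kempeGraph (H : SimpleGraph V) (c : Sym2 V → α) (a b : α) : SimpleGraph V where
  Adj x y := H.Adj x y ∧ (c s(x, y) = a ∨ c s(x, y) = b)
  symm := ⟨fun x y h => by rwa [H.adj_comm, Sym2.eq_swap] at h⟩
  loopless := ⟨fun x h => H.loopless.irrefl x h.1⟩

theorem kempeGraph_color_eq_iff_of_isPath {P : V → Bool} (hP : ∀ ⦃x y⦄, H.Adj x y → P x ≠ P y)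
    (hc : IsProperEdgeColoring H (fun e => c e)) {a b : α} {t : V}
    (ht : H.IsMissingColor c t b) {x z : V} (hxz : (H.kempeGraph c a b).Adj x z)
    (q : (H.kempeGraph c a b).Walk z t) (hq : (Walk.cons hxz q).IsPath) :
    c s(x, z) = a ↔ P x ≠ P t := by
  induction q generalizing x with
  | nil =>
    have hb := ht hxz.1.symm
    rw [Sym2.eq_swap] at hb
    exact iff_of_true (hxz.2.resolve_right hb) (hP hxz.1)
  | @cons z w t hzw q' IH =>
    have hxw : x ≠ w := by
      rintro rfl
      exact ((Walk.cons_isPath_iff _ _).mp hq).2 (by simp)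
    have hne : c s(x, z) ≠ c s(z, w) := by
      rw [Sym2.eq_swap]
      exact (isProperEdgeColoring_iff_adj.mp hc) hxz.1.symm hzw.1 hxw
    have hcol : c s(x, z) = a ↔ ¬ c s(z, w) = a :=
      ⟨fun h h' => hne (h.trans h'.symm),
        fun h' => hxz.2.resolve_right fun h => hne (h.trans (hzw.2.resolve_left h').symm)⟩
    rw [hcol, IH ht hzw hq.of_cons, Bool.eq_not_of_ne (hP hxz.1)]
    cases P z <;> cases P t <;> decide

theorem not_reachable_kempeGraph {P : V → Bool} (hP : ∀ ⦃x y⦄, H.Adj x y → P x ≠ P y)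
    (hc : IsProperEdgeColoring H (fun e => c e)) {a b : α} {x y : V} (hxy : P x ≠ P y)
    (hx : H.IsMissingColor c x a) (hy : H.IsMissingColor c y b) :
    ¬ (H.kempeGraph c a b).Reachable x y := by
  intro hr
  obtain ⟨p, hp⟩ := hr.exists_isPath
  cases p with
  | nil => exact hxy rfl
  | cons hxz q => exact hx hxz.1 ((kempeGraph_color_eq_iff_of_isPath hP hc hy hxz q hp).mpr hxy)

section KempeSwap

variable [DecidableEq α] {a b : α} {u p q : V}

open Classical in
noncomputable def kempeSwap (H : SimpleGraph V) (c : Sym2 V → α) (a b : α) (u : V) :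
    Sym2 V → α := fun e =>
  if ∃ t ∈ e, (H.kempeGraph c a b).Reachable u t then Equiv.swap a b (c e) else c e

theorem kempeSwap_mk_of_reachable
    (h : (H.kempeGraph c a b).Reachable u p ∨ (H.kempeGraph c a b).Reachable u q) :
    H.kempeSwap c a b u s(p, q) = Equiv.swap a b (c s(p, q)) :=
  if_pos (by simpa using h)

theorem kempeSwap_mk_of_not_reachable
    (h : ¬ ((H.kempeGraph c a b).Reachable u p ∨ (H.kempeGraph c a b).Reachable u q)) :
    H.kempeSwap c a b u s(p, q) = c s(p, q) :=
  if_neg (by simpa using h)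

theorem _root_.IsProperEdgeColoring.kempeSwap (hc : IsProperEdgeColoring H (fun e => c e))
    (a b : α) (u : V) : IsProperEdgeColoring H (fun e => H.kempeSwap c a b u e) := by
  rw [isProperEdgeColoring_iff_adj] at hc ⊢
  set R := (H.kempeGraph c a b).Reachable u
  -- a clash would put the unswapped `a`/`b`-edge `pr` into the swapped chain
  have key : ∀ ⦃p q r⦄, H.Adj p q → H.Adj p r → q ≠ r → (R p ∨ R q) → ¬ (R p ∨ R r) →
      Equiv.swap a b (c s(p, q)) ≠ c s(p, r) := by
    intro p q r hpq hpr hqr hq hr heq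
    rw [Equiv.swap_apply_eq_iff] at heq
    by_cases hab : c s(p, r) = a ∨ c s(p, r) = b
    · have hpq' : (H.kempeGraph c a b).Adj p q := by
        refine ⟨hpq, ?_⟩
        rcases hab with h | h <;> rw [h] at heq <;> simp [heq]
      exact hr (Or.inl (hq.elim id hpq'.reachable_iff.mpr))
    · rw [not_or] at hab
      rw [Equiv.swap_apply_of_ne_of_ne hab.1 hab.2] at heq
      exact hc hpq hpr hqr heq
  intro p q r hpq hpr hqr
  by_cases hq : R p ∨ R q <;> by_cases hr : R p ∨ R r
  · rw [kempeSwap_mk_of_reachable hq, kempeSwap_mk_of_reachable hr]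
    exact (Equiv.injective _).ne (hc hpq hpr hqr)
  · rw [kempeSwap_mk_of_reachable hq, kempeSwap_mk_of_not_reachable hr]
    exact key hpq hpr hqr hq hr
  · rw [kempeSwap_mk_of_not_reachable hq, kempeSwap_mk_of_reachable hr]
    exact (key hpr hpq hqr.symm hr hq).symm
  · rw [kempeSwap_mk_of_not_reachable hq, kempeSwap_mk_of_not_reachable hr]
    exact hc hpq hpr hqr

theorem IsMissingColor.kempeSwap_self (hu : H.IsMissingColor c u b) :
    H.IsMissingColor (H.kempeSwap c a b u) u a := by
  intro z hz
  rw [kempeSwap_mk_of_reachable (Or.inl (Reachable.refl u)), Ne, Equiv.swap_apply_eq_iff,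
    Equiv.swap_apply_left]
  exact hu hz

theorem IsMissingColor.kempeSwap_of_not_reachable {x : V} (hx : H.IsMissingColor c x a)
    (hux : ¬ (H.kempeGraph c a b).Reachable u x) :
    H.IsMissingColor (H.kempeSwap c a b u) x a := by
  intro z hz
  by_cases h : (H.kempeGraph c a b).Reachable u x ∨ (H.kempeGraph c a b).Reachable u z
  · rw [kempeSwap_mk_of_reachable h, Ne, Equiv.swap_apply_eq_iff, Equiv.swap_apply_left]
    intro hb
    have hxz : (H.kempeGraph c a b).Adj x z := ⟨hz, Or.inr hb⟩
    exact hux (h.elim id hxz.reachable_iff.mpr)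
  · rw [kempeSwap_mk_of_not_reachable h]
    exact hx hz

end KempeSwap

theorem _root_.IsProperEdgeColoring.exists_map [Nonempty α] {W : Type*} {H' : SimpleGraph W}
    (f : W ↪ V) {c : H'.edgeSet → α} (hc : IsProperEdgeColoring H' c) :
    ∃ c' : Sym2 V → α, IsProperEdgeColoring (H'.map f) (fun e => c' e) := by
  have hg : Function.Injective fun e : H'.edgeSet => Sym2.map f e :=
    (Sym2.map.injective f.injective).comp Subtype.val_injective
  refine ⟨Function.extend (fun e : H'.edgeSet => Sym2.map f e) c fun _ => Classical.arbitrary α,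
    isProperEdgeColoring_iff_adj.mpr ?_⟩
  intro _ _ _ hxy hxz hyz
  obtain ⟨p, q, hpq, rfl, rfl⟩ := (map_adj f H' _ _).mp hxy
  obtain ⟨p', r, hpr, hp, rfl⟩ := (map_adj f H' _ _).mp hxz
  obtain rfl : p = p' := (f.injective hp).symm
  have hq := hg.extend_apply c (fun _ => Classical.arbitrary α) ⟨s(p, q), hpq⟩
  have hr := hg.extend_apply c (fun _ => Classical.arbitrary α) ⟨s(p, r), hpr⟩
  simp only [Sym2.map_mk] at hq hr
  rw [hq, hr]
  exact hc _ _ (fun h => hyz (congrArg f (Sym2.congr_right.mp (congrArg Subtype.val h))))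
    ⟨p, by simp, by simp⟩

section Extension

variable [Fintype V] [Fintype α] {G : SimpleGraph V} [DecidableRel G.Adj]
  {P : V → Bool}

theorem exists_isProperEdgeColoring_sup_edge (hP : ∀ ⦃x y⦄, G.Adj x y → P x ≠ P y)
    (hdeg : ∀ x, G.degree x ≤ Fintype.card α) (hHG : H ≤ G) {x y : V} (hxy : G.Adj x y)
    (hnxy : ¬ H.Adj x y) (hc : IsProperEdgeColoring H (fun e => c e)) :
    ∃ c' : Sym2 V → α, IsProperEdgeColoring (H ⊔ edge x y) (fun e => c' e) := by
  classical
  obtain ⟨a, hxa⟩ := exists_isMissingColor (c := c)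
    ((degree_lt_degree_of_le hHG hxy hnxy).trans_le (hdeg x))
  obtain ⟨b, hyb⟩ := exists_isMissingColor (c := c)
    ((degree_lt_degree_of_le hHG hxy.symm fun h => hnxy h.symm).trans_le (hdeg y))
  have hyx : ¬ (H.kempeGraph c a b).Reachable y x := fun h =>
    not_reachable_kempeGraph (fun _ _ h => hP (hHG h)) hc (hP hxy) hxa hyb h.symm
  exact ⟨_, (hc.kempeSwap a b y).update_sup_edge (hxa.kempeSwap_of_not_reachable hyx)
    hyb.kempeSwap_self⟩

theorem exists_isProperEdgeColoring_of_le (hP : ∀ ⦃x y⦄, G.Adj x y → P x ≠ P y)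
    (hdeg : ∀ x, G.degree x ≤ Fintype.card α) (hHG : H ≤ G)
    (hc : IsProperEdgeColoring H (fun e => c e)) :
    ∃ c' : Sym2 V → α, IsProperEdgeColoring G (fun e => c' e) := by
  induction H using WellFoundedGT.induction generalizing c with
  | _ H IH =>
  obtain rfl | hlt := hHG.eq_or_lt
  · exact ⟨c, hc⟩
  obtain ⟨x, y, hxy, hnxy⟩ : ∃ x y, G.Adj x y ∧ ¬ H.Adj x y := by
    by_contra! h
    exact hlt.not_ge fun x y hxy => h x y hxy
  obtain ⟨c', hc'⟩ := exists_isProperEdgeColoring_sup_edge hP hdeg hHG hxy hnxy hc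
  exact IH _ (lt_sup_edge _ _ _ hxy.ne hnxy) (sup_le hHG ((edge_le_iff G).mpr (Or.inr hxy))) hc'

theorem exists_isProperEdgeColoring_of_induce (hP : ∀ ⦃x y⦄, G.Adj x y → P x ≠ P y)
    (hdeg : ∀ x, G.degree x ≤ Fintype.card α) (s : Set V) {c : (G.induce s).edgeSet → α}
    (hc : IsProperEdgeColoring (G.induce s) c) :
    ∃ c' : G.edgeSet → α, IsProperEdgeColoring G c' := by
  rcases isEmpty_or_nonempty G.edgeSet with hG | ⟨⟨e, he⟩⟩
  · exact ⟨isEmptyElim, fun e => isEmptyElim e⟩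
  have : Nonempty α := by
    induction e using Sym2.ind with
    | _ x y =>
      exact Fintype.card_pos_iff.mp
        (((G.degree_pos_iff_exists_adj x).mpr ⟨y, he⟩).trans_le (hdeg x))
  obtain ⟨c₀, hc₀⟩ := hc.exists_map (Function.Embedding.subtype s)
  obtain ⟨c', hc'⟩ := exists_isProperEdgeColoring_of_le hP hdeg (G.spanningCoe_induce_le s) hc₀
  exact ⟨_, hc'⟩

end Extension

end SimpleGraph

/-- If a bipartite graph `G` has max degree at most `k` and `G` minus a vertex `v`
has a proper edge coloring with `k` colors, then so does `G`. -/
theorem konig_extend_coloring {V : Type*} [Fintype V] (G : SimpleGraph V)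
    [DecidableRel G.Adj] {k : ℕ} (v : V)
    (hbip : ∃ P : V → Bool, ∀ u w, G.Adj u w → P u ≠ P w)
    (hdeg : ∀ u, G.degree u ≤ k)
    (hcol : ∃ c : (G.induce {v}ᶜ).edgeSet → Fin k,
      IsProperEdgeColoring (G.induce {v}ᶜ) c) :
    ∃ c : G.edgeSet → Fin k, IsProperEdgeColoring G c := by
  obtain ⟨P, hP⟩ := hbip
  obtain ⟨c, hc⟩ := hcol
  exact G.exists_isProperEdgeColoring_of_induce (fun x y => hP x y) (by simpa using hdeg) _ hc
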